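/- Let n ≥ 1 be an integer and t > 0. For every (z,w) ∈ ℂ^{2n} and every η ∈ ℝ, the absolutely convergent integral I(λ) = ∫_ℝ exp(2t(λ+is/2)²) · exp(-2η(λ+is/2)) · W_t^{λ+is/2}(z,w) ds takes the same value for all λ > 0; i.e. the defining integral of the partial weight function W_t^+ is independent of the choice of λ > 0. -/

import Mathlib

open MeasureTheory Complex Filter Topology

noncomputable section

/-- The weight function with complex parameter `μ` (for `Re μ ≠ 0`):
`W_t^μ(x+iy, u+iv) = 4^n exp(μ(u·y - v·x)) (4π)^{-n} (μ/sinh(2tμ))^n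
  exp(-μ·coth(2tμ)·(|y|²+|v|²))`. -/
def WtC (n : ℕ) (t : ℝ) (mu : ℂ) (z w : Fin n → ℂ) : ℂ :=
  4 ^ n *
    Complex.exp (mu * ((((∑ j, (w j).re * (z j).im) - ∑ j, (w j).im * (z j).re : ℝ)) : ℂ)) *
    (((4 * Real.pi) ^ n)⁻¹ : ℝ) * (mu / Complex.sinh (2 * t * mu)) ^ n *
    Complex.exp (-(mu * (Complex.cosh (2 * t * mu) / Complex.sinh (2 * t * mu))) *
      (((∑ j, (z j).im ^ 2) + ∑ j, (w j).im ^ 2 : ℝ) : ℂ))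


/-!
The integrand is holomorphic in `μ = λ + is/2` on `Re μ > 0`, where `sinh (2tμ)` has no zeros.
On a strip `0 < a ≤ Re μ ≤ b` the factor `exp (2tμ²)` has modulus `exp (2t(x² - y²))`, which
beats the at most exponential growth in `|μ|` of all other factors, so the integrand is dominated
by a Gaussian in `Im μ` uniformly on the strip. Cauchy's theorem on rectangles, with the
horizontal sides sent to infinity, then moves the line of integration from `λ₁` to `λ₂`.
-/

open Set
open scoped Interval

namespace Complex

theorem integral_vertical_eq_of_differentiableOn_strip {E : Type*}
    [NormedAddCommGroup E] [NormedSpace ℂ E] [CompleteSpace E] {f : ℂ → E} {a b : ℝ}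
    {g : ℝ → ℝ} (hf : DifferentiableOn ℂ f (re ⁻¹' [[a, b]])) (hg : Integrable g)
    (hg_zero : Tendsto g (cocompact ℝ) (𝓝 0))
    (hfg : ∀ x ∈ [[a, b]], ∀ y : ℝ, ‖f (x + y * I)‖ ≤ g y) :
    ∫ y : ℝ, f (a + y * I) = ∫ y : ℝ, f (b + y * I) := by
  have hline : ∀ x ∈ [[a, b]], Tendsto (fun R : ℝ ↦ ∫ y in -R..R, f (x + y * I)) atTop
      (𝓝 (∫ y : ℝ, f (x + y * I))) := by
    intro x hx
    have hcont : Continuous fun y : ℝ ↦ f (x + y * I) :=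
      hf.continuousOn.comp_continuous (by fun_prop) fun y ↦ by simpa using hx
    exact intervalIntegral_tendsto_integral
      (hg.mono' hcont.aestronglyMeasurable (.of_forall (hfg x hx)))
      tendsto_neg_atTop_atBot tendsto_id
  have hhoriz : ∀ l ≤ cocompact ℝ,
      Tendsto (fun R : ℝ ↦ ∫ x : ℝ in a..b, f (x + R * I)) l (𝓝 0) := by
    intro l hl
    refine squeeze_zero_norm (fun R ↦ ?_) (by
      simpa using (hg_zero.mono_left hl).mul_const |b - a|)
    exact intervalIntegral.norm_integral_le_of_norm_le_const fun x hx ↦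
      hfg x (uIoc_subset_uIcc hx) R
  have hrect : ∀ R : ℝ,
      I • (∫ y in -R..R, f (a + y * I)) = I • (∫ y in -R..R, f (b + y * I)) +
        ((∫ x : ℝ in a..b, f (x + (-R : ℝ) * I)) - ∫ x : ℝ in a..b, f (x + R * I)) := by
    intro R
    have h := integral_boundary_rect_eq_zero_of_differentiableOn f ⟨a, -R⟩ ⟨b, R⟩
      (hf.mono fun μ hμ ↦ hμ.1)
    dsimp only at h
    rw [← sub_eq_zero, ← neg_eq_zero.mpr h]
    abel
  have hlim := ((hline b right_mem_uIcc).const_smul I).add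
    (((hhoriz atBot atBot_le_cocompact).comp tendsto_neg_atTop_atBot).sub
      (hhoriz atTop atTop_le_cocompact))
  rw [sub_zero, add_zero] at hlim
  exact smul_right_injective E I_ne_zero <| tendsto_nhds_unique
    ((hline a left_mem_uIcc).const_smul I) (hlim.congr fun R ↦ (hrect R).symm)

lemma norm_sinh_sq (z : ℂ) : ‖sinh z‖ ^ 2 = Real.sinh z.re ^ 2 + Real.sin z.im ^ 2 := by
  have h : sinh z =
      (Real.sinh z.re * Real.cos z.im : ℝ) + (Real.cosh z.re * Real.sin z.im : ℝ) * I := by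
    conv_lhs => rw [← re_add_im z]
    rw [sinh_add, cosh_mul_I, sinh_mul_I]
    push_cast
    ring
  rw [h, norm_add_mul_I, Real.sq_sqrt (by positivity)]
  nlinarith [Real.sin_sq_add_cos_sq z.im, Real.cosh_sq z.re]

lemma norm_cosh_sq (z : ℂ) : ‖cosh z‖ ^ 2 = Real.cosh z.re ^ 2 - Real.sin z.im ^ 2 := by
  have h : cosh z =
      (Real.cosh z.re * Real.cos z.im : ℝ) + (Real.sinh z.re * Real.sin z.im : ℝ) * I := by
    conv_lhs => rw [← re_add_im z]
    rw [cosh_add, cosh_mul_I, sinh_mul_I]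
    push_cast
    ring
  rw [h, norm_add_mul_I, Real.sq_sqrt (by positivity)]
  nlinarith [Real.sin_sq_add_cos_sq z.im, Real.cosh_sq z.re]

lemma abs_sinh_re_le_norm_sinh (z : ℂ) : |Real.sinh z.re| ≤ ‖sinh z‖ := by
  rw [← abs_norm, ← sq_le_sq, norm_sinh_sq]
  nlinarith [sq_nonneg (Real.sin z.im)]

lemma norm_cosh_le_cosh_re (z : ℂ) : ‖cosh z‖ ≤ Real.cosh z.re := by
  rw [← abs_norm, ← abs_of_pos (Real.cosh_pos z.re), ← sq_le_sq, norm_cosh_sq]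
  nlinarith [sq_nonneg (Real.sin z.im)]

lemma sinh_ne_zero_of_re_pos {z : ℂ} (hz : 0 < z.re) : sinh z ≠ 0 :=
  norm_pos_iff.1 ((abs_pos.2 (Real.sinh_ne_zero.2 hz.ne')).trans_le (abs_sinh_re_le_norm_sinh z))

end Complex

def HasExpGrowthOn (S : Set ℂ) (f : ℂ → ℂ) : Prop :=
  ∃ C D : ℝ, ∀ μ ∈ S, ‖f μ‖ ≤ C * Real.exp (D * ‖μ‖)

namespace HasExpGrowthOn

variable {S : Set ℂ} {f g : ℂ → ℂ}

lemma of_norm_le (M : ℝ) (h : ∀ μ ∈ S, ‖f μ‖ ≤ M) : HasExpGrowthOn S f :=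
  ⟨M, 0, fun μ hμ ↦ by simpa using h μ hμ⟩

lemma const (c : ℂ) : HasExpGrowthOn S fun _ ↦ c :=
  of_norm_le ‖c‖ fun _ _ ↦ le_rfl

lemma id : HasExpGrowthOn S fun μ ↦ μ :=
  ⟨1, 1, fun μ _ ↦ by
    simpa using (le_add_of_nonneg_right zero_le_one).trans (Real.add_one_le_exp ‖μ‖)⟩

lemma mul (hf : HasExpGrowthOn S f) (hg : HasExpGrowthOn S g) :
    HasExpGrowthOn S fun μ ↦ f μ * g μ := by
  obtain ⟨C₁, D₁, h₁⟩ := hf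
  obtain ⟨C₂, D₂, h₂⟩ := hg
  refine ⟨C₁ * C₂, D₁ + D₂, fun μ hμ ↦ ?_⟩
  calc ‖f μ * g μ‖
      ≤ C₁ * Real.exp (D₁ * ‖μ‖) * (C₂ * Real.exp (D₂ * ‖μ‖)) := by
        rw [norm_mul]
        exact mul_le_mul (h₁ μ hμ) (h₂ μ hμ) (norm_nonneg _) ((norm_nonneg _).trans (h₁ μ hμ))
    _ = C₁ * C₂ * Real.exp ((D₁ + D₂) * ‖μ‖) := by rw [add_mul, Real.exp_add]; ring

lemma pow (hf : HasExpGrowthOn S f) (k : ℕ) : HasExpGrowthOn S fun μ ↦ f μ ^ k := by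
  induction k with
  | zero => simpa using const 1
  | succ k ih => simpa only [pow_succ] using ih.mul hf

lemma inv_of_le_norm {m : ℝ} (hm : 0 < m) (h : ∀ μ ∈ S, m ≤ ‖f μ‖) :
    HasExpGrowthOn S fun μ ↦ (f μ)⁻¹ :=
  of_norm_le m⁻¹ fun μ hμ ↦ by rw [norm_inv]; exact inv_anti₀ hm (h μ hμ)

lemma cexp_of_norm_le {K : ℝ} (h : ∀ μ ∈ S, ‖f μ‖ ≤ K * ‖μ‖) :
    HasExpGrowthOn S fun μ ↦ cexp (f μ) :=
  ⟨1, K, fun μ hμ ↦ by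
    rw [one_mul]; exact (norm_exp_le_exp_norm _).trans (Real.exp_le_exp.2 (h μ hμ))⟩

lemma cexp_const_mul (c : ℂ) : HasExpGrowthOn S fun μ ↦ cexp (c * μ) :=
  cexp_of_norm_le fun μ _ ↦ (norm_mul c μ).le

lemma cexp_mul_const (c : ℂ) : HasExpGrowthOn S fun μ ↦ cexp (μ * c) :=
  cexp_of_norm_le fun μ _ ↦ by rw [norm_mul, mul_comm]

end HasExpGrowthOn

lemma abs_le_abs_add_abs_of_mem_uIcc {a b x : ℝ} (hx : x ∈ [[a, b]]) : |x| ≤ |a| + |b| := by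
  rcases mem_uIcc.1 hx with h | h <;> rw [abs_le] <;> constructor <;>
    linarith [neg_abs_le a, neg_abs_le b, le_abs_self a, le_abs_self b, h.1, h.2]

lemma HasExpGrowthOn.exists_norm_cexp_mul_sq_mul_le {f : ℂ → ℂ} {a b c : ℝ} (hc : 0 < c)
    (hf : HasExpGrowthOn (re ⁻¹' [[a, b]]) f) :
    ∃ C : ℝ, ∀ x ∈ [[a, b]], ∀ y : ℝ,
      ‖cexp (c * (x + y * I) ^ 2) * f (x + y * I)‖ ≤ C * Real.exp (-(c / 2) * y ^ 2) := by
  obtain ⟨C₀, D, hC₀D⟩ := hf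
  set M := |a| + |b|
  refine ⟨C₀ * Real.exp (c * M ^ 2 + |D| * M + D ^ 2 / (2 * c)), fun x hx y ↦ ?_⟩
  have hfμ := hC₀D (x + y * I) (by simpa using hx)
  have hC₀ : 0 ≤ C₀ :=
    (mul_nonneg_iff_of_pos_right (Real.exp_pos _)).1 ((norm_nonneg _).trans hfμ)
  have hxM : |x| ≤ M := abs_le_abs_add_abs_of_mem_uIcc hx
  have hμ : ‖(x + y * I : ℂ)‖ ≤ |x| + |y| := by
    simpa using norm_le_abs_re_add_abs_im (x + y * I)
  have hexponent : c * (x ^ 2 - y ^ 2) + D * ‖(x + y * I : ℂ)‖ ≤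
      c * M ^ 2 + |D| * M + D ^ 2 / (2 * c) + -(c / 2) * y ^ 2 := by
    have hDμ : D * ‖(x + y * I : ℂ)‖ ≤ |D| * (M + |y|) :=
      (mul_le_mul_of_nonneg_right (le_abs_self D) (norm_nonneg _)).trans
        (mul_le_mul_of_nonneg_left (by linarith) (abs_nonneg D))
    have hsq : |D| * |y| - c / 2 * y ^ 2 ≤ D ^ 2 / (2 * c) := by
      rw [le_div_iff₀ (by positivity), ← sq_abs y, ← sq_abs D]
      nlinarith [sq_nonneg (c * |y| - |D|)]
    have hx2 : x ^ 2 ≤ M ^ 2 := by rw [← sq_abs x]; gcongr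
    nlinarith
  calc ‖cexp (c * (x + y * I) ^ 2) * f (x + y * I)‖
      ≤ Real.exp (c * (x ^ 2 - y ^ 2)) * (C₀ * Real.exp (D * ‖(x + y * I : ℂ)‖)) := by
        rw [norm_mul, norm_exp]
        refine mul_le_mul (le_of_eq ?_) hfμ (norm_nonneg _) (Real.exp_pos _).le
        congr 1
        simp [sq]
    _ = C₀ * Real.exp (c * (x ^ 2 - y ^ 2) + D * ‖(x + y * I : ℂ)‖) := by
        rw [Real.exp_add]; ring
    _ ≤ C₀ * Real.exp (c * M ^ 2 + |D| * M + D ^ 2 / (2 * c) + -(c / 2) * y ^ 2) := by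
        gcongr
    _ = _ := by rw [Real.exp_add, mul_assoc]

lemma differentiableAt_WtC (n : ℕ) (t : ℝ) (z w : Fin n → ℂ) {μ : ℂ}
    (hμ : sinh (2 * t * μ) ≠ 0) : DifferentiableAt ℂ (fun μ ↦ WtC n t μ z w) μ := by
  unfold WtC
  fun_prop (disch := exact hμ)

lemma hasExpGrowthOn_WtC (n : ℕ) {t m M : ℝ} (ht : 0 < t) (hm : 0 < m) (z w : Fin n → ℂ) :
    HasExpGrowthOn (re ⁻¹' Icc m M) fun μ ↦ WtC n t μ z w := by
  have hre : ∀ μ : ℂ, (2 * t * μ).re = 2 * t * μ.re := fun μ ↦ by simp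
  have hsinh : ∀ μ ∈ re ⁻¹' Icc m M, Real.sinh (2 * t * m) ≤ ‖sinh (2 * t * μ)‖ := by
    intro μ hμ
    refine le_trans ?_ ((le_abs_self _).trans (abs_sinh_re_le_norm_sinh _))
    have hμm : m ≤ μ.re := hμ.1
    rw [hre, Real.sinh_le_sinh]
    gcongr
  have hcosh : ∀ μ ∈ re ⁻¹' Icc m M, ‖cosh (2 * t * μ)‖ ≤ Real.cosh (2 * t * M) := by
    intro μ hμ
    refine (norm_cosh_le_cosh_re _).trans ?_
    have hμ_pos : 0 < μ.re := hm.trans_le hμ.1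
    have hμM : μ.re ≤ M := hμ.2
    rw [hre, Real.cosh_le_cosh, abs_of_pos (by positivity), abs_of_pos (by nlinarith)]
    gcongr
  have hsinh_pos : 0 < Real.sinh (2 * t * m) := Real.sinh_pos_iff.2 (by positivity)
  have hinv := HasExpGrowthOn.inv_of_le_norm hsinh_pos hsinh
  set A : ℝ := (∑ j, (w j).re * (z j).im) - ∑ j, (w j).im * (z j).re
  set B : ℝ := (∑ j, (z j).im ^ 2) + ∑ j, (w j).im ^ 2
  have hcoth : HasExpGrowthOn (re ⁻¹' Icc m M) fun μ ↦
      cexp (-(μ * (cosh (2 * t * μ) / sinh (2 * t * μ))) * B) := by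
    refine .cexp_of_norm_le (K := Real.cosh (2 * t * M) / Real.sinh (2 * t * m) * |B|)
      fun μ hμ ↦ ?_
    rw [norm_mul, norm_neg, norm_mul, norm_div, norm_real, Real.norm_eq_abs]
    have := div_le_div₀ (Real.cosh_pos _).le (hcosh μ hμ) hsinh_pos (hsinh μ hμ)
    calc _ ≤ ‖μ‖ * (Real.cosh (2 * t * M) / Real.sinh (2 * t * m)) * |B| := by gcongr
      _ = _ := by ring
  unfold WtC
  simp only [div_eq_mul_inv] at hcoth ⊢
  exact ((((HasExpGrowthOn.const _).mul (.cexp_mul_const _)).mul (.const _)).mul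
    ((HasExpGrowthOn.id.mul hinv).pow n)).mul hcoth

lemma integral_add_I_mul_div_two {E : Type*} [NormedAddCommGroup E] [NormedSpace ℂ E]
    (f : ℂ → E) (a : ℝ) :
    ∫ s : ℝ, f (a + I * s / 2) = (2 : ℝ) • ∫ y : ℝ, f (a + y * I) := by
  have h : ∀ s : ℝ, f (a + I * s / 2) = f (a + ((s / 2 : ℝ) : ℂ) * I) := fun s ↦ by
    push_cast; ring_nf
  simp_rw [h, Measure.integral_comp_div (fun y : ℝ ↦ f (a + y * I)) 2, abs_two]

lemma Real.tendsto_const_mul_exp_neg_mul_sq_cocompact {b : ℝ} (hb : 0 < b) (C : ℝ) :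
    Tendsto (fun y : ℝ ↦ C * Real.exp (-b * y ^ 2)) (cocompact ℝ) (𝓝 0) := by
  simpa using (tendsto_rpow_abs_mul_exp_neg_mul_sq_cocompact hb 0).const_mul C

theorem partial_weight_integral_indep_general
    (n : ℕ) (t : ℝ) (ht : 0 < t)
    (z w : Fin n → ℂ) (η : ℝ) (lam₁ lam₂ : ℝ) (h₁ : 0 < lam₁) (h₂ : 0 < lam₂) :
    (∫ s : ℝ,
        Complex.exp (2 * t * ((lam₁ : ℂ) + Complex.I * s / 2) ^ 2) *
          Complex.exp (-2 * (η : ℂ) * ((lam₁ : ℂ) + Complex.I * s / 2)) *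
          WtC n t ((lam₁ : ℂ) + Complex.I * s / 2) z w)
      = ∫ s : ℝ,
          Complex.exp (2 * t * ((lam₂ : ℂ) + Complex.I * s / 2) ^ 2) *
            Complex.exp (-2 * (η : ℂ) * ((lam₂ : ℂ) + Complex.I * s / 2)) *
            WtC n t ((lam₂ : ℂ) + Complex.I * s / 2) z w := by
  set F : ℂ → ℂ := fun μ ↦ cexp (2 * t * μ ^ 2) * cexp (-2 * η * μ) * WtC n t μ z w
  have hm : 0 < lam₁ ⊓ lam₂ := lt_min h₁ h₂
  have hF : DifferentiableOn ℂ F (re ⁻¹' [[lam₁, lam₂]]) := fun μ hμ ↦ by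
    have hμ_pos : 0 < μ.re := hm.trans_le hμ.1
    have hW := differentiableAt_WtC n t z w
      (sinh_ne_zero_of_re_pos (by simpa using mul_pos (mul_pos two_pos ht) hμ_pos))
    exact DifferentiableAt.differentiableWithinAt (by fun_prop)
  obtain ⟨C, hC⟩ := ((HasExpGrowthOn.cexp_const_mul (-2 * η)).mul
    (hasExpGrowthOn_WtC n ht hm z w)).exists_norm_cexp_mul_sq_mul_le (c := 2 * t) (by positivity)
  have hshift := integral_vertical_eq_of_differentiableOn_strip hF
    ((integrable_exp_neg_mul_sq (by positivity : 0 < 2 * t / 2)).const_mul C)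
    (Real.tendsto_const_mul_exp_neg_mul_sq_cocompact (by positivity) C) fun x hx y ↦ by
      simpa only [F, mul_assoc, ofReal_mul, ofReal_ofNat] using hC x hx y
  calc _ = (2 : ℝ) • ∫ y : ℝ, F (lam₁ + y * I) := integral_add_I_mul_div_two F lam₁
    _ = (2 : ℝ) • ∫ y : ℝ, F (lam₂ + y * I) := by rw [hshift]
    _ = _ := (integral_add_I_mul_div_two F lam₂).symm

/-- The defining integral of the partial weight function `W_t^+` is
independent of the choice of `λ > 0`: for all `(z,w) ∈ ℂ^{2n}` and `η ∈ ℝ`, the integral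
`I(λ) = ∫_ℝ exp(2t(λ+is/2)²) exp(-2η(λ+is/2)) W_t^{λ+is/2}(z,w) ds` has the same value for
all `λ > 0`. -/
theorem partial_weight_integral_indep
    (n : ℕ) (hn : 1 ≤ n) (t : ℝ) (ht : 0 < t)
    (z w : Fin n → ℂ) (η : ℝ) (lam₁ lam₂ : ℝ) (h₁ : 0 < lam₁) (h₂ : 0 < lam₂) :
    (∫ s : ℝ,
        Complex.exp (2 * t * ((lam₁ : ℂ) + Complex.I * s / 2) ^ 2) *
          Complex.exp (-2 * (η : ℂ) * ((lam₁ : ℂ) + Complex.I * s / 2)) *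
          WtC n t ((lam₁ : ℂ) + Complex.I * s / 2) z w)
      = ∫ s : ℝ,
          Complex.exp (2 * t * ((lam₂ : ℂ) + Complex.I * s / 2) ^ 2) *
            Complex.exp (-2 * (η : ℂ) * ((lam₂ : ℂ) + Complex.I * s / 2)) *
            WtC n t ((lam₂ : ℂ) + Complex.I * s / 2) z w :=
  partial_weight_integral_indep_general n t ht z w η lam₁ lam₂ h₁ h₂
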